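/- For n ≥ 1 and x ∈ (−1,1), the principal value integral p.v. ∫_{−1}^{1} T_n(y) / (√(1 − y²)·(x − y)) dy equals −π·U_{n−1}(x). -/

import Mathlib

/-!
Write `μ_T` for the Chebyshev measure `dy / √(1 - y²)` on `(-1, 1]`. Since
`y T_{k}(y) = x T_{k}(y) - (x - y) T_{k}(y)`, the recurrence `T_{n+2} = 2 y T_{n+1} - T_n` passes
to the principal values, up to the extra term `-2 ∫ T_{n+1} dμ_T`, which vanishes by
orthogonality (for `T_0` it is `π`, which gives `n = 1`). So the principal values satisfy the
recurrence of `-π U_{n-1}(x)`. The remaining case, `p.v. ∫ dμ_T(y) / (x - y) = 0`, follows from the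
explicit primitive `(log (1 - x y + √(1 - x²) √(1 - y²)) - log |x - y|) / √(1 - x²)`, which vanishes
at `±1` and whose values at `x ∓ ε` differ by `o(1)`.
-/

open Polynomial Polynomial.Chebyshev Real Filter Topology MeasureTheory

open Set

theorem tendsto_setIntegral_dist_gt {α E : Type*} [MetricSpace α] [MeasurableSpace α]
    [OpensMeasurableSpace α] [NormedAddCommGroup E] [NormedSpace ℝ E] {μ : Measure α}
    [NullSingletonClass μ] {g : α → E} (hg : Integrable g μ) (x : α) :
    Tendsto (fun ε => ∫ y in {y | ε < dist y x}, g y ∂μ) (𝓝[>] 0) (𝓝 (∫ y, g y ∂μ)) := by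
  have hmeas (ε : ℝ) : MeasurableSet {y | ε < dist y x} :=
    (isOpen_lt continuous_const (continuous_id.dist continuous_const)).measurableSet
  simp_rw [← integral_indicator (hmeas _)]
  refine tendsto_integral_filter_of_dominated_convergence (‖g ·‖)
    (.of_forall fun ε => hg.aestronglyMeasurable.indicator (hmeas ε))
    (.of_forall fun ε => .of_forall fun y => norm_indicator_le_norm_self _ _) hg.norm ?_
  filter_upwards [compl_mem_ae_iff.mpr (measure_singleton x)] with y hy
  refine tendsto_const_nhds.congr' ?_
  filter_upwards [Ioo_mem_nhdsGT (dist_pos.mpr hy)] with ε hε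
  exact (indicator_of_mem (s := {y | ε < dist y x}) hε.2 g).symm

theorem setIntegral_Ioo_eq_sub_of_hasDerivAt {a b : ℝ} {G g : ℝ → ℝ} (hab : a ≤ b)
    (hG : ContinuousOn G (Icc a b)) (hG' : ∀ y ∈ Ioo a b, HasDerivAt G (g y) y)
    (hg : IntegrableOn g (Ioo a b)) :
    ∫ y in Ioo a b, g y = G b - G a := by
  rw [← integral_Ioc_eq_integral_Ioo, ← intervalIntegral.integral_of_le hab]
  exact intervalIntegral.integral_eq_sub_of_hasDerivAt_of_le hab hG hG'
    ((intervalIntegrable_iff_integrableOn_Ioo_of_le hab).mpr hg)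

theorem measurableSet_abs_sub_gt (x ε : ℝ) : MeasurableSet {y : ℝ | ε < |y - x|} :=
  measurableSet_lt measurable_const (by fun_prop)

theorem abs_sub_gt_inter_Ioo {a b x ε : ℝ} (hε : 0 ≤ ε) (ha : a ≤ x - ε) (hb : x + ε ≤ b) :
    {y | ε < |y - x|} ∩ Ioo a b = Ioo a (x - ε) ∪ Ioo (x + ε) b := by
  ext y
  simp only [mem_inter_iff, mem_ofPred_eq, mem_Ioo, mem_union, lt_abs]
  constructor
  · rintro ⟨h | h, hay, hyb⟩
    · exact .inr ⟨by linarith, hyb⟩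
    · exact .inl ⟨hay, by linarith⟩
  · rintro (⟨hay, hy⟩ | ⟨hy, hyb⟩)
    · exact ⟨.inr (by linarith), hay, by linarith⟩
    · exact ⟨.inl (by linarith), by linarith, hyb⟩

theorem setIntegral_abs_sub_gt_inter_Ioo_eq_sub {a b x ε : ℝ} {G g : ℝ → ℝ} (hε : 0 < ε)
    (ha : a ≤ x - ε) (hb : x + ε ≤ b) (hG : ContinuousOn G (Icc a b \ {x}))
    (hG' : ∀ y ∈ Ioo a b \ {x}, HasDerivAt G (g y) y)
    (hg : IntegrableOn g ({y | ε < |y - x|} ∩ Ioo a b)) :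
    ∫ y in {y | ε < |y - x|} ∩ Ioo a b, g y = G (x - ε) - G a + (G b - G (x + ε)) := by
  rw [abs_sub_gt_inter_Ioo hε.le ha hb] at hg ⊢
  have hdisj : Disjoint (Ioo a (x - ε)) (Ioo (x + ε) b) :=
    disjoint_left.mpr fun y h₁ h₂ => by linarith [h₁.2, h₂.1]
  rw [setIntegral_union hdisj measurableSet_Ioo hg.left_of_union hg.right_of_union,
    setIntegral_Ioo_eq_sub_of_hasDerivAt ha
      (hG.mono fun y hy => ⟨⟨hy.1, by linarith [hy.2]⟩, by rintro rfl; linarith [hy.2]⟩)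
      (fun y hy => hG' y ⟨⟨hy.1, by linarith [hy.2]⟩, by rintro rfl; linarith [hy.2]⟩)
      hg.left_of_union,
    setIntegral_Ioo_eq_sub_of_hasDerivAt hb
      (hG.mono fun y hy => ⟨⟨by linarith [hy.1], hy.2⟩, by rintro rfl; linarith [hy.1]⟩)
      (fun y hy => hG' y ⟨⟨by linarith [hy.1], hy.2⟩, by rintro rfl; linarith [hy.1]⟩)
      hg.right_of_union]

instance nullSingletonClass_measureT : NullSingletonClass measureT := by
  unfold measureT
  infer_instance

theorem setIntegral_measureT (g : ℝ → ℝ) {s : Set ℝ} (hs : MeasurableSet s) :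
    ∫ y in s, g y ∂measureT = ∫ y in s ∩ Ioo (-1) 1, g y / √(1 - y ^ 2) := by
  rw [measureT, Measure.restrict_restrict hs,
    setIntegral_withDensity_eq_setIntegral_smul (by fun_prop) _ (hs.inter measurableSet_Ioc),
    setIntegral_congr_set (ae_eq_refl s |>.inter Ioo_ae_eq_Ioc).symm]
  simp [NNReal.smul_def, div_eq_inv_mul]

theorem integrableOn_measureT_iff {g : ℝ → ℝ} {s : Set ℝ} (hs : MeasurableSet s) :
    IntegrableOn g s measureT ↔ IntegrableOn (fun y => g y / √(1 - y ^ 2)) (s ∩ Ioo (-1) 1) := by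
  rw [IntegrableOn, measureT, Measure.restrict_restrict hs,
    restrict_withDensity (hs.inter measurableSet_Ioc),
    integrable_withDensity_iff_integrable_smul (by fun_prop),
    ← IntegrableOn, integrableOn_congr_set_ae (ae_eq_refl s |>.inter Ioo_ae_eq_Ioc).symm]
  simp [NNReal.smul_def, div_eq_inv_mul]

/-- Since `Real.log (x - y) = log |x - y|`, this single formula is a primitive of
`y ↦ 1 / ((x - y) √(1 - y²))` on both sides of `x`. -/
noncomputable def cauchyKernelPrimitive (x y : ℝ) : ℝ :=
  (log (1 - x * y + √(1 - x ^ 2) * √(1 - y ^ 2)) - log (x - y)) / √(1 - x ^ 2)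

section CauchyKernelPrimitive

variable {x : ℝ}

theorem one_sub_mul_add_sqrt_mul_sqrt_pos (hx : x ∈ Ioo (-1) 1) {y : ℝ} (hy : y ∈ Icc (-1) 1) :
    0 < 1 - x * y + √(1 - x ^ 2) * √(1 - y ^ 2) := by
  have : x * y < 1 := by
    obtain ⟨hx₁, hx₂⟩ := hx
    obtain ⟨hy₁, hy₂⟩ := hy
    nlinarith [mul_nonneg (sub_nonneg.2 hx₂.le) (neg_le_iff_add_nonneg.1 hy₁),
      mul_nonneg (neg_le_iff_add_nonneg.1 hx₁.le) (sub_nonneg.2 hy₂)]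
  positivity

theorem hasDerivAt_cauchyKernelPrimitive (hx : x ∈ Ioo (-1) 1) {y : ℝ}
    (hy : y ∈ Ioo (-1) 1 \ {x}) :
    HasDerivAt (cauchyKernelPrimitive x) (1 / (x - y) / √(1 - y ^ 2)) y := by
  obtain ⟨⟨hy₁, hy₂⟩, hyx⟩ := hy
  have hxy : x - y ≠ 0 := sub_ne_zero.mpr (Ne.symm hyx)
  have hs : 0 < √(1 - x ^ 2) := sqrt_pos.mpr (by nlinarith [hx.1, hx.2])
  have hw : 0 < √(1 - y ^ 2) := sqrt_pos.mpr (by nlinarith)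
  have hN := one_sub_mul_add_sqrt_mul_sqrt_pos hx ⟨hy₁.le, hy₂.le⟩
  have hsqrt : HasDerivAt (fun y => √(1 - y ^ 2)) (-(2 * y) / (2 * √(1 - y ^ 2))) y := by
    simpa using ((hasDerivAt_pow 2 y).const_sub 1).sqrt (by nlinarith)
  have hlogN := ((((hasDerivAt_id y).const_mul x).const_sub 1).add
    (hsqrt.const_mul √(1 - x ^ 2))).log hN.ne'
  have hlog := ((hasDerivAt_id y).const_sub x).log hxy
  refine ((hlogN.sub hlog).div_const √(1 - x ^ 2)).congr_deriv ?_
  simp only [Pi.add_apply, id]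
  field_simp
  have hs2 := sq_sqrt (by nlinarith [hx.1, hx.2] : (0 : ℝ) ≤ 1 - x ^ 2)
  have hw2 := sq_sqrt (by nlinarith : (0 : ℝ) ≤ 1 - y ^ 2)
  linear_combination √(1 - x ^ 2) * hw2 - √(1 - y ^ 2) * hs2

theorem continuousOn_cauchyKernelPrimitive (hx : x ∈ Ioo (-1) 1) :
    ContinuousOn (cauchyKernelPrimitive x) (Icc (-1) 1 \ {x}) :=
  ((ContinuousOn.log (by fun_prop) fun _ hy => (one_sub_mul_add_sqrt_mul_sqrt_pos hx hy.1).ne').sub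
    (ContinuousOn.log (by fun_prop) fun _ hy => sub_ne_zero.mpr (Ne.symm hy.2))).div_const _

theorem cauchyKernelPrimitive_neg_one : cauchyKernelPrimitive x (-1) = 0 := by
  simp [cauchyKernelPrimitive, sub_eq_add_neg, add_comm]

theorem cauchyKernelPrimitive_one : cauchyKernelPrimitive x 1 = 0 := by
  rw [cauchyKernelPrimitive, ← neg_sub 1 x, log_neg_eq_log]
  simp

theorem tendsto_cauchyKernelPrimitive_sub (hx : x ∈ Ioo (-1) 1) :
    Tendsto (fun ε => cauchyKernelPrimitive x (x - ε) - cauchyKernelPrimitive x (x + ε))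
      (𝓝 0) (𝓝 0) := by
  set N : ℝ → ℝ := fun y => 1 - x * y + √(1 - x ^ 2) * √(1 - y ^ 2)
  have hN : N x ≠ 0 := (one_sub_mul_add_sqrt_mul_sqrt_pos hx ⟨hx.1.le, hx.2.le⟩).ne'
  have heq (ε : ℝ) : cauchyKernelPrimitive x (x - ε) - cauchyKernelPrimitive x (x + ε) =
      (log (N (x - ε)) - log (N (x + ε))) / √(1 - x ^ 2) := by
    rw [cauchyKernelPrimitive, cauchyKernelPrimitive, show x - (x + ε) = -ε by ring,
      log_neg_eq_log, sub_sub_cancel]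
    ring
  have hcont : ContinuousAt (fun ε => (log (N (x - ε)) - log (N (x + ε))) / √(1 - x ^ 2)) 0 :=
    ((ContinuousAt.log (by fun_prop) (by simpa using hN)).sub
      (ContinuousAt.log (by fun_prop) (by simpa using hN))).div_const _
  convert hcont.tendsto using 1
  · exact funext heq
  · simp

end CauchyKernelPrimitive

noncomputable def truncHilbertT (f : ℝ → ℝ) (x ε : ℝ) : ℝ :=
  ∫ y in {y | ε < |y - x|}, f y / (x - y) ∂measureT

theorem truncHilbertT_eq_setIntegral (f : ℝ → ℝ) (x ε : ℝ) :
    truncHilbertT f x ε =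
      ∫ y in {y | ε < |y - x|} ∩ Ioo (-1) 1, f y / (√(1 - y ^ 2) * (x - y)) := by
  simp_rw [truncHilbertT, setIntegral_measureT _ (measurableSet_abs_sub_gt x ε), div_div,
    mul_comm (x - _)]

section TruncHilbertT

variable {f g : ℝ → ℝ} {x ε : ℝ}

theorem integrableOn_div_sub_measureT (hf : ContinuousOn f (Icc (-1) 1)) (hε : 0 < ε) :
    IntegrableOn (fun y => f y / (x - y)) {y | ε < |y - x|} measureT := by
  simp_rw [div_eq_inv_mul]
  refine (integrable_measureT hf).restrict.bdd_mul (c := ε⁻¹)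
    (by fun_prop : Measurable fun y => (x - y)⁻¹).aestronglyMeasurable
    (ae_restrict_of_forall_mem (measurableSet_abs_sub_gt x ε) fun y hy => ?_)
  rw [norm_inv, Real.norm_eq_abs, abs_sub_comm]
  exact inv_anti₀ hε hy.le

theorem truncHilbertT_const_mul (c : ℝ) :
    truncHilbertT (fun y => c * f y) x ε = c * truncHilbertT f x ε := by
  simp_rw [truncHilbertT, mul_div_assoc, integral_const_mul]

theorem truncHilbertT_sub (hf : ContinuousOn f (Icc (-1) 1)) (hg : ContinuousOn g (Icc (-1) 1))
    (hε : 0 < ε) :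
    truncHilbertT (fun y => f y - g y) x ε = truncHilbertT f x ε - truncHilbertT g x ε := by
  simp_rw [truncHilbertT, sub_div]
  exact integral_sub (integrableOn_div_sub_measureT hf hε) (integrableOn_div_sub_measureT hg hε)

theorem truncHilbertT_id_mul (hf : ContinuousOn f (Icc (-1) 1)) (hε : 0 < ε) :
    truncHilbertT (fun y => y * f y) x ε =
      x * truncHilbertT f x ε - ∫ y in {y | ε < |y - x|}, f y ∂measureT := by
  rw [truncHilbertT, truncHilbertT, ← integral_const_mul,
    ← integral_sub ((integrableOn_div_sub_measureT hf hε).const_mul x)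
      (integrable_measureT hf).integrableOn]
  refine setIntegral_congr_fun (measurableSet_abs_sub_gt x ε) fun y hy => ?_
  have hxy : x - y ≠ 0 := by
    rintro h
    simp [show y - x = 0 by linarith] at hy
    linarith
  field_simp
  ring

theorem tendsto_truncHilbertT_sub {L M : ℝ} (hf : ContinuousOn f (Icc (-1) 1))
    (hg : ContinuousOn g (Icc (-1) 1)) (hfL : Tendsto (truncHilbertT f x) (𝓝[>] 0) (𝓝 L))
    (hgM : Tendsto (truncHilbertT g x) (𝓝[>] 0) (𝓝 M)) :
    Tendsto (truncHilbertT (fun y => f y - g y) x) (𝓝[>] 0) (𝓝 (L - M)) := by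
  refine (hfL.sub hgM).congr' ?_
  filter_upwards [self_mem_nhdsWithin] with ε hε
  exact (truncHilbertT_sub hf hg hε).symm

theorem tendsto_truncHilbertT_id_mul {L : ℝ} (hf : ContinuousOn f (Icc (-1) 1))
    (h : Tendsto (truncHilbertT f x) (𝓝[>] 0) (𝓝 L)) :
    Tendsto (truncHilbertT (fun y => y * f y) x) (𝓝[>] 0)
      (𝓝 (x * L - ∫ y, f y ∂measureT)) := by
  have hcut := tendsto_setIntegral_dist_gt (integrable_measureT hf) x
  simp only [Real.dist_eq] at hcut
  refine ((h.const_mul x).sub hcut).congr' ?_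
  filter_upwards [self_mem_nhdsWithin] with ε hε
  exact (truncHilbertT_id_mul hf hε).symm

theorem tendsto_truncHilbertT_one (hx : x ∈ Ioo (-1) 1) :
    Tendsto (truncHilbertT (fun _ => 1) x) (𝓝[>] 0) (𝓝 0) := by
  refine ((tendsto_cauchyKernelPrimitive_sub hx).mono_left nhdsWithin_le_nhds).congr' ?_
  have hpos : 0 < min (1 - x) (1 + x) := lt_min (by linarith [hx.2]) (by linarith [hx.1])
  filter_upwards [Ioo_mem_nhdsGT hpos] with ε ⟨hε, hεx⟩
  have hS := measurableSet_abs_sub_gt x ε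
  rw [truncHilbertT, setIntegral_measureT _ hS,
    setIntegral_abs_sub_gt_inter_Ioo_eq_sub hε (by linarith [min_le_right (1 - x) (1 + x)])
      (by linarith [min_le_left (1 - x) (1 + x)]) (continuousOn_cauchyKernelPrimitive hx)
      (fun y hy => hasDerivAt_cauchyKernelPrimitive hx hy)
      ((integrableOn_measureT_iff hS).mp (integrableOn_div_sub_measureT continuousOn_const hε)),
    cauchyKernelPrimitive_neg_one, cauchyKernelPrimitive_one]
  ring

end TruncHilbertT

theorem tendsto_truncHilbertT_T {x : ℝ} (hx : x ∈ Ioo (-1) 1) (n : ℕ) :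
    Tendsto (truncHilbertT (T ℝ n).eval x) (𝓝[>] 0) (𝓝 (-π * (U ℝ (n - 1)).eval x)) := by
  induction n using Nat.twoStepInduction with
  | zero => simpa using tendsto_truncHilbertT_one hx
  | one =>
    have h₀ : Tendsto (truncHilbertT (T ℝ 0).eval x) (𝓝[>] 0) (𝓝 0) := by
      simpa using tendsto_truncHilbertT_one hx
    have h₁ := tendsto_truncHilbertT_id_mul (Polynomial.continuousOn _) h₀
    rw [integral_eval_T_real_measureT_zero] at h₁
    simpa using h₁
  | more n hn hn₁ =>
    have hT : (T ℝ (n + 2 : ℕ)).eval =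
        fun y => 2 * (y * (T ℝ (n + 1 : ℕ)).eval y) - (T ℝ n).eval y := by
      ext y
      simp only [Nat.cast_add, Nat.cast_ofNat, Nat.cast_one, T_add_two, eval_sub, eval_mul,
        eval_ofNat, eval_X]
      ring
    have h₂ := (tendsto_truncHilbertT_id_mul (Polynomial.continuousOn _) hn₁).const_mul 2
    simp_rw [← truncHilbertT_const_mul] at h₂
    rw [hT]
    convert tendsto_truncHilbertT_sub (by fun_prop) (Polynomial.continuousOn _) h₂ hn using 2
    rw [integral_eval_T_real_measureT_of_ne_zero (by omega)]
    push_cast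
    rw [show (n : ℤ) + 2 - 1 = n - 1 + 2 by ring, U_add_two]
    simp only [eval_sub, eval_mul, eval_ofNat, eval_X, sub_add_cancel, add_sub_cancel_right]
    ring

theorem chebyshev_pv_integral_general (n : ℕ) (x : ℝ) (hx : x ∈ Set.Ioo (-1 : ℝ) 1) :
    Tendsto
      (fun ε : ℝ =>
        ∫ y in {y : ℝ | ε < |y - x|} ∩ Set.Ioo (-1 : ℝ) 1,
          (T ℝ (n : ℤ)).eval y / (Real.sqrt (1 - y ^ 2) * (x - y)))
      (𝓝[>] 0) (𝓝 (-π * (U ℝ ((n : ℤ) - 1)).eval x)) :=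
  (tendsto_truncHilbertT_T hx n).congr (truncHilbertT_eq_setIntegral _ x)

/-- For `n ≥ 1` and `x ∈ (−1,1)`, the principal value integral
`p.v. ∫_{−1}^{1} T_n(y)/(√(1−y²)(x−y)) dy` equals `−π·U_{n−1}(x)`. -/
theorem chebyshev_pv_integral (n : ℕ) (hn : 1 ≤ n) (x : ℝ) (hx : x ∈ Set.Ioo (-1 : ℝ) 1) :
    Tendsto
      (fun ε : ℝ =>
        ∫ y in {y : ℝ | ε < |y - x|} ∩ Set.Ioo (-1 : ℝ) 1,
          (T ℝ (n : ℤ)).eval y / (Real.sqrt (1 - y ^ 2) * (x - y)))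
      (𝓝[>] 0) (𝓝 (-π * (U ℝ ((n : ℤ) - 1)).eval x)) :=
  chebyshev_pv_integral_general n x hx
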